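/- Let (P, L) be a finite projective plane of order k and let G be its incidence graph. Then every vertex v of G satisfies fun_G(v) ≥ k + 1; that is, v is not a function of any set of at most k vertices of G. -/

import Mathlib

open Classical in
/-- `v` is a function of the set `U` of vertices in the graph `G`. -/
def SimpleGraph.IsFunctionOf {V : Type*} (G : SimpleGraph V) (v : V)
    (U : Finset V) : Prop :=
  v ∉ U ∧ ∃ f : (U → Bool) → Bool, ∀ w : V, w ∉ U → w ≠ v →
    (G.Adj v w ↔ f (fun u => decide (G.Adj w u.1)) = true)

/-- The functionality of a vertex: least size of a set of which it is a function. -/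
noncomputable def SimpleGraph.vertexFun {V : Type*} (G : SimpleGraph V) (v : V) : ℕ :=
  sInf {k | ∃ U : Finset V, U.card = k ∧ G.IsFunctionOf v U}

/-- The functionality of a graph. -/
noncomputable def SimpleGraph.graphFun {V : Type*} (G : SimpleGraph V) : ℕ :=
  sSup {m | ∃ W : Set V, W.Nonempty ∧
    m = sInf {k | ∃ v : W, k = (G.induce W).vertexFun v}}

/-- The symmetric difference of a pair of distinct vertices. -/
noncomputable def SimpleGraph.sdPair {V : Type*} (G : SimpleGraph V) (u v : V) : ℕ :=
  {w | w ≠ u ∧ w ≠ v ∧ ((G.Adj w u ∧ ¬ G.Adj w v) ∨ (¬ G.Adj w u ∧ G.Adj w v))}.ncard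

/-- The symmetric difference of a graph. -/
noncomputable def SimpleGraph.sdGraph {V : Type*} (G : SimpleGraph V) : ℕ :=
  sSup {m | ∃ W : Set V, (∃ u v : W, u ≠ v) ∧
    m = sInf {k | ∃ u v : W, u ≠ v ∧ k = (G.induce W).sdPair u v}}


/-- The incidence graph of an incidence structure of points and lines. -/
def incidenceGraph (P L : Type*) [Membership P L] : SimpleGraph (P ⊕ L) where
  Adj x y :=
    match x, y with
    | Sum.inl p, Sum.inr l => p ∈ l
    | Sum.inr l, Sum.inl p => p ∈ l
    | _, _ => False
  symm := ⟨by rintro (p | l) (q | m) h <;> simp_all⟩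
  loopless := ⟨by rintro (p | l) h <;> simp_all⟩

/-!
Let `U` be a set of at most `k` vertices and `p` a point. Of the `k + 1` lines through `p`, at most
`k` lie in `U` or pass through a point of `U`, so some line `l₁ ∋ p` has no neighbour in `U`. It
remains to find a vertex outside `U`, not adjacent to `p`, with no neighbour in `U`; it then has the
same trace on `U` as `l₁`, so `p` is not a function of `U`. If `U` contains no line, any point
outside `U ∪ {p}` will do. Otherwise pick a line `m ∈ U` and a point `x ∈ l₁` off `m` and `p`; among
the `k + 1` lines through `x`, those through `p` or a point of `U`, or in `U`, number at most `k`,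
since `m` does not pass through `x`. Lines are handled by duality.
-/

open Configuration Configuration.ProjectivePlane Finset

namespace SimpleGraph

variable {V V' : Type*} {G : SimpleGraph V} {G' : SimpleGraph V'} {v : V} {U : Finset V}

theorem IsFunctionOf.adj_iff_adj (h : G.IsFunctionOf v U) {w₁ w₂ : V} (hw₁ : w₁ ∉ U)
    (hw₂ : w₂ ∉ U) (hw₁v : w₁ ≠ v) (hw₂v : w₂ ≠ v) (hU : ∀ u ∈ U, G.Adj w₁ u ↔ G.Adj w₂ u) :
    G.Adj v w₁ ↔ G.Adj v w₂ := by
  obtain ⟨-, f, hf⟩ := h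
  rw [hf w₁ hw₁ hw₁v, hf w₂ hw₂ hw₂v]
  congr! 3 with u
  exact decide_eq_decide.2 (hU u u.2)

theorem IsFunctionOf.map (e : G ≃g G') (h : G.IsFunctionOf v U) :
    G'.IsFunctionOf (e v) (U.map e.toEquiv.toEmbedding) := by
  obtain ⟨hvU, f, hf⟩ := h
  refine ⟨(mem_map' _).not.2 hvU, fun g => f fun u => g ⟨e u, mem_map_of_mem _ u.2⟩, ?_⟩
  intro w' hw' hw'v
  obtain ⟨w, rfl⟩ := e.surjective w'
  rw [e.map_adj_iff, hf w ((mem_map' _).not.1 hw') (ne_of_apply_ne e hw'v)]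
  congr! 3 with u
  exact decide_eq_decide.2 e.map_adj_iff.symm

theorem isFunctionOf_univ_erase [Fintype V] [DecidableEq V] (G : SimpleGraph V) (v : V) :
    G.IsFunctionOf v (univ.erase v) :=
  ⟨notMem_erase v _, fun _ => true, fun w hw hwv => (hw (mem_erase.2 ⟨hwv, mem_univ w⟩)).elim⟩

theorem le_vertexFun [Finite V] {n : ℕ} (h : ∀ U, G.IsFunctionOf v U → n ≤ U.card) :
    n ≤ G.vertexFun v := by
  classical
  have := Fintype.ofFinite V
  exact le_csInf ⟨_, _, rfl, G.isFunctionOf_univ_erase v⟩ (by rintro _ ⟨U, rfl, hU⟩; exact h U hU)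

end SimpleGraph

namespace incidenceGraph

variable {P L : Type*} [Membership P L]

@[simp] theorem not_adj_inl_inl {p q : P} : ¬ (incidenceGraph P L).Adj (.inl p) (.inl q) :=
  id

@[simp] theorem not_adj_inr_inr {l m : L} : ¬ (incidenceGraph P L).Adj (.inr l) (.inr m) :=
  id

theorem forall_not_adj_inr {U : Finset (P ⊕ L)} {l : L} (h : ∀ q ∈ U.toLeft, q ∉ l) :
    ∀ u ∈ U, ¬ (incidenceGraph P L).Adj (.inr l) u := by
  rintro (q | m) hu
  · exact h q (mem_toLeft.2 hu)
  · exact not_adj_inr_inr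

def isoDual : incidenceGraph P L ≃g incidenceGraph (Dual L) (Dual P) where
  toEquiv := Equiv.sumComm P L
  map_rel_iff' := by rintro (p | l) (q | m) <;> rfl

end incidenceGraph

namespace Configuration.ProjectivePlane

variable {P L : Type*} [Membership P L]

theorem exists_line_through_avoiding [Finite P] [Fintype L] [ProjectivePlane P L] {x : P}
    {S : Finset P} (hx : x ∉ S) (B : Finset L) (h : S.card + B.card ≤ order P L) :
    ∃ l : L, x ∈ l ∧ l ∉ B ∧ ∀ q ∈ S, q ∉ l := by
  classical
  set T := univ.filter fun l : L => x ∈ l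
  have hT : T.card = order P L + 1 := by
    rw [← lineCount_eq L x, lineCount, Nat.card_eq_fintype_card, Fintype.card_subtype]
  have hTq : ∀ q ∈ S, (T.filter (q ∈ ·)).card ≤ 1 := fun q hq => card_le_one.2 fun l hl m hm => by
    simp only [T, mem_filter, mem_univ, true_and] at hl hm
    exact (Nondegenerate.eq_or_eq hl.1 hl.2 hm.1 hm.2).resolve_left
      (ne_of_mem_of_not_mem hq hx).symm
  obtain ⟨l, hlT, hl⟩ := exists_mem_notMem_of_card_lt_card
    (s := B ∪ S.biUnion fun q => T.filter (q ∈ ·)) (t := T) <| by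
      have := card_union_le B (S.biUnion fun q => T.filter (q ∈ ·))
      have := card_biUnion_le_card_mul S _ 1 hTq
      omega
  simp only [T, mem_filter, mem_univ, true_and, mem_union, mem_biUnion, not_or, not_exists,
    not_and] at hlT hl
  exact ⟨l, hlT, hl.1, fun q hq hql => hl.2 q hq hlT hql⟩

theorem exists_mem_ne_notMem [Fintype P] [Finite L] [ProjectivePlane P L] {l m : L} (hlm : l ≠ m)
    (p : P) : ∃ x ∈ l, x ≠ p ∧ x ∉ m := by
  classical
  have hl : 2 < (univ.filter (· ∈ l)).card := by
    rw [← Fintype.card_subtype, ← Nat.card_eq_fintype_card]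
    exact two_lt_pointCount P l
  have hy := HasPoints.mkPoint_ax (P := P) hlm
  obtain ⟨x, hxl, hx⟩ := exists_mem_notMem_of_card_lt_card (card_le_two.trans_lt hl)
    (s := {p, HasPoints.mkPoint hlm})
  simp only [mem_filter, mem_univ, true_and, mem_insert, mem_singleton, not_or] at hxl hx
  exact ⟨x, hxl, hx.1, fun hxm =>
    hx.2 ((Nondegenerate.eq_or_eq hxl hy.1 hxm hy.2).resolve_right hlm)⟩

end Configuration.ProjectivePlane

namespace incidenceGraph

variable {P L : Type*} [Membership P L] [Fintype P] [Fintype L] [ProjectivePlane P L]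

theorem not_isFunctionOf_inl (p : P) {U : Finset (P ⊕ L)} (hU : U.card ≤ order P L) :
    ¬ (incidenceGraph P L).IsFunctionOf (.inl p) U := by
  classical
  intro hfn
  have hp : p ∉ U.toLeft := fun h => hfn.1 (mem_toLeft.1 h)
  have hcard : U.toLeft.card + U.toRight.card ≤ order P L := by
    rwa [card_toLeft_add_card_toRight]
  obtain ⟨l₁, hpl₁, hl₁U, hl₁S⟩ := exists_line_through_avoiding hp U.toRight hcard
  suffices ∃ w ∉ U, w ≠ .inl p ∧ ¬ (incidenceGraph P L).Adj (.inl p) w ∧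
      ∀ u ∈ U, ¬ (incidenceGraph P L).Adj w u by
    obtain ⟨w, hwU, hwp, hpw, hw⟩ := this
    exact hpw ((hfn.adj_iff_adj (mem_toRight.not.1 hl₁U) hwU (by simp) hwp fun u hu =>
      iff_of_false (forall_not_adj_inr hl₁S u hu) (hw u hu)).1 hpl₁)
  rcases U.toRight.eq_empty_or_nonempty with hUL | ⟨m, hm⟩
  · have hS : (insert p U.toLeft).card < (univ : Finset P).card := by
      have := card_insert_le p U.toLeft
      have := one_lt_order P L
      rw [card_univ, card_points P L]
      nlinarith
    obtain ⟨q, -, hq⟩ := exists_mem_notMem_of_card_lt_card hS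
    rw [mem_insert, not_or] at hq
    refine ⟨.inl q, fun h => hq.2 (mem_toLeft.2 h), Sum.inl_injective.ne hq.1, by simp, ?_⟩
    rintro (_ | m) hu
    · exact not_adj_inl_inl
    · exact absurd (mem_toRight.2 hu) (hUL ▸ notMem_empty m)
  · obtain ⟨x, hxl₁, hxp, hxm⟩ := exists_mem_ne_notMem (ne_of_mem_of_not_mem hm hl₁U).symm p
    have hx : x ∉ insert p U.toLeft := by
      rw [mem_insert, not_or]
      exact ⟨hxp, fun h => hl₁S x h hxl₁⟩
    obtain ⟨l₂, hxl₂, hl₂U, hl₂S⟩ := exists_line_through_avoiding hx (U.toRight.erase m) <| by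
      rw [card_insert_of_notMem hp, card_erase_of_mem hm]
      have := card_pos.2 ⟨m, hm⟩
      omega
    refine ⟨.inr l₂, fun h => ?_, by simp, hl₂S p (mem_insert_self _ _),
      forall_not_adj_inr fun q hq => hl₂S q (mem_insert_of_mem hq)⟩
    exact hl₂U (mem_erase.2 ⟨fun e => hxm (e ▸ hxl₂), mem_toRight.2 h⟩)

theorem not_isFunctionOf_inr (l : L) {U : Finset (P ⊕ L)} (hU : U.card ≤ order P L) :
    ¬ (incidenceGraph P L).IsFunctionOf (.inr l) U := fun h =>
  not_isFunctionOf_inl (P := Dual L) (L := Dual P) l (by rwa [card_map, Dual.order])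
    (h.map isoDual)

theorem not_isFunctionOf (v : P ⊕ L) {U : Finset (P ⊕ L)} (hU : U.card ≤ order P L) :
    ¬ (incidenceGraph P L).IsFunctionOf v U :=
  v.rec (not_isFunctionOf_inl · hU) (not_isFunctionOf_inr · hU)

end incidenceGraph

/-- In the incidence graph of a finite projective plane of order `k`,
every vertex has vertex functionality at least `k + 1`; equivalently, no vertex is a
function of a set of at most `k` vertices. -/
theorem vertexFun_incidenceGraph_projectivePlane
    (P L : Type*) [Membership P L] [Fintype P] [Fintype L]
    [Configuration.ProjectivePlane P L] (k : ℕ)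
    (hk : Configuration.ProjectivePlane.order P L = k) (v : P ⊕ L) :
    k + 1 ≤ (incidenceGraph P L).vertexFun v ∧
      ∀ U : Finset (P ⊕ L), U.card ≤ k → ¬ (incidenceGraph P L).IsFunctionOf v U := by
  subst hk
  refine ⟨SimpleGraph.le_vertexFun fun U hU => ?_, fun U => incidenceGraph.not_isFunctionOf v⟩
  by_contra! h
  exact incidenceGraph.not_isFunctionOf v (Nat.le_of_lt_succ h) hU
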